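/- Branching identity for σ̄: for vectors x_i, ..., x_j (j > i), σ̄_{(n-1)(j-i)}^{(r)}(x_i, ..., x_j) = Σ_{k=0}^{n-1} (Π_{t=0}^{k-1} x_i^{(r-t)}) σ̄_{(n-1)(j-i-1)}^{(r-k)}(x_{i+1}, ..., x_j) (Π_{s=0}^{n-k-2} x_j^{(r-k+j-i-1-s)}), with all upper indices taken modulo n. -/

import Mathlib

open Finset

noncomputable section BirationalR

/-- A vector of reals with cyclically indexed coordinates (upper index mod `n`). -/
abbrev Vec (n : ℕ) := ZMod n → ℝ

/-- `κ_r(a,b) = Σ_{j=r}^{r+n-1} (Π_{k=r+1}^{j} b_k)(Π_{k=j+1}^{r+n-1} a_k)`, indices mod `n`. -/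
def kappaF (n : ℕ) (r : ZMod n) (a b : Vec n) : ℝ :=
  ∑ d ∈ Finset.range n,
    (∏ t ∈ Finset.range d, b (r + 1 + (t : ℕ))) *
      ∏ t ∈ Finset.range (n - 1 - d), a (r + 1 + (d : ℕ) + (t : ℕ))

/-- First component `b'` of the birational R-matrix `η(a,b) = (b',a')`:
`b'_i = b_{i+1} κ_{i+1}(a,b)/κ_i(a,b)`. -/
def etaB (n : ℕ) (a b : Vec n) : Vec n :=
  fun i => b (i + 1) * kappaF n (i + 1) a b / kappaF n i a b

/-- Second component `a'` of `η(a,b) = (b',a')`: `a'_i = a_{i-1} κ_{i-1}(a,b)/κ_i(a,b)`. -/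
def etaA (n : ℕ) (a b : Vec n) : Vec n :=
  fun i => a (i - 1) * kappaF n (i - 1) a b / kappaF n i a b

/-- `η` applied to positions `(p, p+1)` of a tuple of vectors. -/
def etaAt (n : ℕ) (p : ℕ) (X : ℕ → Vec n) : ℕ → Vec n :=
  fun q => if q = p then etaB n (X p) (X (p + 1))
    else if q = p + 1 then etaA n (X p) (X (p + 1)) else X q

/-- Action of the word `s_{w₁} s_{w₂} ⋯ s_{wₗ}` (rightmost acts first). -/
def applyWord (n : ℕ) (w : List ℕ) (X : ℕ → Vec n) : ℕ → Vec n :=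
  w.foldr (etaAt n) X

/-- The tuple `(x_i, x_{i+1}, …, x_j)` as a list. -/
def seg {n : ℕ} (x : ℕ → Vec n) (i j : ℕ) : List (Vec n) :=
  (List.range (j + 1 - i)).map fun t => x (i + t)

/-- `τ_k^{(r)}(x_1,…,x_m)`: sum over weakly increasing `i_1 ≤ … ≤ i_k`, no index used
more than `n-1` times, of `x_{i_1}^{(r)} x_{i_2}^{(r-1)} ⋯ x_{i_k}^{(r-k+1)}`.
Encoded via multiplicity functions; `τ = 0` for negative `k`. -/
def tauF (n : ℕ) (r : ZMod n) (k : ℤ) (x : List (Vec n)) : ℝ :=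
  if 0 ≤ k then
    ∑ c ∈ (Fintype.piFinset fun _ : Fin x.length => Finset.range n).filter
        (fun c => ∑ i, c i = k.toNat),
      ∏ i : Fin x.length, ∏ β ∈ Finset.range (c i),
        x.get i (r - (∑ i' ∈ Finset.univ.filter (fun i' => i' < i), c i' : ℕ) - (β : ℕ))
  else 0

/-- `σ_k^{(r)}(x_1,…,x_m) = Σ_{t=0}^{k} x_1^{(r)} ⋯ x_1^{(r-t+1)} τ_{k-t}^{(r-t)}(x_2,…,x_m)`. -/
def sigmaF (n : ℕ) (r : ZMod n) (k : ℕ) : List (Vec n) → ℝ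
  | [] => if k = 0 then 1 else 0
  | y :: rest =>
      ∑ t ∈ Finset.range (k + 1),
        (∏ β ∈ Finset.range t, y (r - (β : ℕ))) * tauF n (r - (t : ℕ)) ((k : ℤ) - (t : ℤ)) rest

/-- `σ̄_k^{(r)}(x_1,…,x_m) = Σ_{t=0}^{k} τ_{k-t}^{(r)}(x_1,…,x_{m-1}) x_m^{(r-k+t)} ⋯ x_m^{(r-k+1)}`. -/
def sigmaBarF (n : ℕ) (r : ZMod n) (k : ℕ) : List (Vec n) → ℝ
  | [] => if k = 0 then 1 else 0
  | y :: rest =>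
      ∑ t ∈ Finset.range (k + 1),
        tauF n r ((k : ℤ) - (t : ℤ)) ((y :: rest).dropLast) *
          ∏ β ∈ Finset.range t,
            (y :: rest).getLast (List.cons_ne_nil y rest) (r - (k : ℕ) + 1 + (β : ℕ))

/-- `Ω_k^{(r)}(x_i,…,x_j) = Σ_{ℓ=0}^{n-1} σ^{(r)}_{(n-1)(k-i)+ℓ}(x_i,…,x_k)
σ̄^{(r+k-i-ℓ)}_{(n-1)(j-k)-ℓ}(x_{k+1},…,x_j)`. -/
def OmegaF (n : ℕ) (r : ZMod n) (k i j : ℕ) (x : ℕ → Vec n) : ℝ :=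
  ∑ ℓ ∈ Finset.range n,
    sigmaF n r ((n - 1) * (k - i) + ℓ) (seg x i k) *
      sigmaBarF n (r + (k : ℕ) - (i : ℕ) - (ℓ : ℕ)) ((n - 1) * (j - k) - ℓ) (seg x (k + 1) j)

/-- `P_k^{(r)}(x_i,…,x_j) = Σ_{t=0}^{k} (Π_{s=0}^{t-1} x_i^{(r-s)})
σ_{(n-1)(j-i-1)}^{(r-t)}(x_i,…,x_{j-1}) (Π_{s=0}^{k-t-1} x_j^{(r-t+j-i-1-s)})`. -/
def PF (n : ℕ) (r : ZMod n) (k i j : ℕ) (x : ℕ → Vec n) : ℝ :=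
  ∑ t ∈ Finset.range (k + 1),
    (∏ s ∈ Finset.range t, x i (r - (s : ℕ))) *
      sigmaF n (r - (t : ℕ)) ((n - 1) * (j - i - 1)) (seg x i (j - 1)) *
      ∏ s ∈ Finset.range (k - t), x j (r - (t : ℕ) + (j : ℕ) - (i : ℕ) - 1 - (s : ℕ))

end BirationalR

/-!
Expanding `τ(x_i, …, x_{j-1})` along its first variable (by the multiplicity `k < n` of `x_i`)
turns the left side into a double sum over `k` and the number `t` of factors of `x_j`. With
`K = (n-1)(j-i)`, the factor `τ_{K-k-t}(x_{i+1}, …, x_{j-1})` vanishes unless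
`0 ≤ K - k - t ≤ (n-1)(j-i-1)`, so the shift `t = (n - 1 - k) + s` turns the inner sum into
`σ̄^{(r-k)}(x_{i+1}, …, x_j)`. The first `n - 1 - k` factors of `x_j` split off as the last
product of the identity, read backwards; matching their upper indices uses
`-(n-1)(j-i) ≡ j - i (mod n)`.
-/

section Seg

variable {n : ℕ} (x : ℕ → Vec n)

lemma length_seg (i j : ℕ) : (seg x i j).length = j + 1 - i := by
  simp [seg]

lemma seg_eq_cons {i j : ℕ} (h : i ≤ j) : seg x i j = x i :: seg x (i + 1) j := by
  rw [seg, show j + 1 - i = j - i + 1 by omega, List.range_succ_eq_map, List.map_cons, seg,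
    show j + 1 - (i + 1) = j - i by omega, List.map_map]
  simp only [Nat.add_zero, List.map_inj_left, Function.comp_apply, List.cons.injEq, true_and]
  intro t _
  rw [Nat.add_right_comm, Nat.add_assoc]

lemma seg_succ_right {i j : ℕ} (h : i ≤ j + 1) : seg x i (j + 1) = seg x i j ++ [x (j + 1)] := by
  rw [seg, show j + 1 + 1 - i = j + 1 - i + 1 by omega, List.range_succ, List.map_append, seg]
  simp only [List.map_cons, List.map_nil]
  rw [show i + (j + 1 - i) = j + 1 by omega]

end Seg

lemma Fintype.sum_piFinset_fin_succ {β M : Type*} [AddCommMonoid M] {m : ℕ}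
    (S : Fin (m + 1) → Finset β) (f : (Fin (m + 1) → β) → M) :
    ∑ c ∈ Fintype.piFinset S, f c =
      ∑ a ∈ S 0, ∑ c ∈ Fintype.piFinset (Fin.tail S), f (Fin.cons a c) := by
  have h := Finset.filter_piFinset_eq_map_consEquiv S (fun _ => True)
  rw [Finset.filter_true, Finset.filter_true] at h
  rw [h, Finset.sum_map, Finset.sum_product]
  rfl

section Tau

variable {n : ℕ}

def tauTerm (n : ℕ) (r : ZMod n) (x : List (Vec n)) (c : Fin x.length → ℕ) : ℝ :=
  ∏ i : Fin x.length, ∏ β ∈ Finset.range (c i),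
    x.get i (r - (∑ i' ∈ Finset.univ.filter (fun i' => i' < i), c i' : ℕ) - (β : ℕ))

lemma tauF_eq_sum_ite (r : ZMod n) (k : ℤ) (x : List (Vec n)) :
    tauF n r k x = ∑ c ∈ Fintype.piFinset (fun _ : Fin x.length => Finset.range n),
      if ((∑ i, c i : ℕ) : ℤ) = k then tauTerm n r x c else 0 := by
  rw [tauF, ← Finset.sum_filter]
  split_ifs with hk
  · congr 1
    exact Finset.filter_congr fun c _ => by omega
  · exact (Finset.sum_eq_zero fun c hc => absurd (Finset.mem_filter.1 hc).2 (by omega)).symm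

lemma tauF_of_neg (r : ZMod n) {k : ℤ} (hk : k < 0) (x : List (Vec n)) : tauF n r k x = 0 := by
  simp [tauF, not_le.2 hk]

lemma tauF_eq_zero_of_lt (r : ZMod n) {k : ℤ} (x : List (Vec n))
    (hk : (((n - 1) * x.length : ℕ) : ℤ) < k) : tauF n r k x = 0 := by
  rw [tauF_eq_sum_ite]
  refine Finset.sum_eq_zero fun c hc => if_neg ?_
  have hle : ∑ i, c i ≤ ∑ _i : Fin x.length, (n - 1) := Finset.sum_le_sum fun i _ =>
    Nat.le_sub_one_of_lt (Finset.mem_range.1 (Fintype.mem_piFinset.1 hc i))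
  simp only [Finset.sum_const, Finset.card_univ, Fintype.card_fin, smul_eq_mul] at hle
  rw [Nat.mul_comm] at hle
  omega

lemma tauTerm_cons (r : ZMod n) (y : Vec n) (rest : List (Vec n)) (k : ℕ)
    (c : Fin rest.length → ℕ) :
    tauTerm n r (y :: rest) (Fin.cons k c) =
      (∏ β ∈ Finset.range k, y (r - (β : ℕ))) * tauTerm n (r - (k : ℕ)) rest c := by
  have prefix_succ (i : Fin rest.length) :
      ∑ i' ∈ Finset.univ.filter (· < i.succ), (Fin.cons k c : Fin (rest.length + 1) → ℕ) i' =
        k + ∑ i' ∈ Finset.univ.filter (· < i), c i' := by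
    simp [Finset.sum_filter, Fin.sum_univ_succ, Fin.succ_lt_succ_iff, Fin.succ_pos]
  rw [tauTerm]
  erw [Fin.prod_univ_succ]
  congr 1
  · erw [Finset.filter_false_of_mem fun i _ => Fin.not_lt_zero i, Finset.sum_empty, Nat.cast_zero,
      sub_zero]
    rfl
  · refine Finset.prod_congr rfl fun i _ => Finset.prod_congr rfl fun β _ => ?_
    erw [prefix_succ, Nat.cast_add, sub_add_eq_sub_sub]
    rfl

lemma tauF_cons (r : ZMod n) (M : ℤ) (y : Vec n) (rest : List (Vec n)) :
    tauF n r M (y :: rest) =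
      ∑ k ∈ Finset.range n,
        (∏ β ∈ Finset.range k, y (r - (β : ℕ))) * tauF n (r - (k : ℕ)) (M - k) rest := by
  rw [tauF_eq_sum_ite]
  erw [Fintype.sum_piFinset_fin_succ]
  refine Finset.sum_congr rfl fun k _ => ?_
  rw [tauF_eq_sum_ite, Finset.mul_sum]
  refine Finset.sum_congr rfl fun c _ => ?_
  erw [Fin.sum_cons]
  rw [tauTerm_cons, mul_ite, mul_zero]
  exact if_congr (by omega) rfl rfl

end Tau

section SigmaBar

variable {n : ℕ}

lemma sigmaBarF_append_singleton (r : ZMod n) (k : ℕ) (l : List (Vec n)) (z : Vec n) :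
    sigmaBarF n r k (l ++ [z]) =
      ∑ t ∈ Finset.range (k + 1),
        tauF n r ((k : ℤ) - t) l * ∏ β ∈ Finset.range t, z (r - (k : ℕ) + 1 + (β : ℕ)) := by
  obtain ⟨y, rest, h⟩ := List.exists_cons_of_ne_nil (List.concat_ne_nil z l)
  have hlast : (y :: rest).getLast (List.cons_ne_nil y rest) = z := by
    simp_rw [← h, List.getLast_concat]
  have hinit : (y :: rest).dropLast = l := by rw [← h, List.dropLast_concat]
  rw [h, sigmaBarF, hlast, hinit]

lemma sum_range_tauF_mul_shift (r : ZMod n) (L : List (Vec n)) (f : ℕ → ℝ)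
    (D N : ℕ) (hN : D + (n - 1) * L.length ≤ N) :
    ∑ t ∈ Finset.range (N + 1), tauF n r (((D + (n - 1) * L.length : ℕ) : ℤ) - t) L * f t =
      ∑ s ∈ Finset.range ((n - 1) * L.length + 1),
        tauF n r (((n - 1) * L.length : ℕ) - (s : ℤ)) L * f (D + s) := by
  set d := (n - 1) * L.length
  have hsub : Finset.Ico D (D + (d + 1)) ⊆ Finset.range (N + 1) := fun t ht => by
    simp only [Finset.mem_Ico, Finset.mem_range] at ht ⊢; omega
  rw [← Finset.sum_subset hsub, Finset.sum_Ico_eq_sum_range, Nat.add_sub_cancel_left]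
  · refine Finset.sum_congr rfl fun s _ => ?_
    rw [show ((D + d : ℕ) : ℤ) - (D + s : ℕ) = d - s by push_cast; ring]
  · intro t _ ht
    simp only [Finset.mem_Ico, not_and_or, not_le, not_lt] at ht
    rw [ht.elim (fun h => tauF_eq_zero_of_lt r L (by omega)) (fun h => tauF_of_neg r (by omega) L),
      zero_mul]

lemma prod_shifted_range_split (hn : 1 ≤ n) (z : Vec n) (r : ZMod n) {k : ℕ} (hk : k < n)
    (m s : ℕ) :
    ∏ β ∈ Finset.range (n - 1 - k + s), z (r - ((n - 1) * (m + 1) : ℕ) + 1 + (β : ℕ)) =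
      (∏ t ∈ Finset.range (n - k - 1), z (r - (k : ℕ) + (m : ℕ) - (t : ℕ))) *
        ∏ β ∈ Finset.range s, z (r - (k : ℕ) - ((n - 1) * m : ℕ) + 1 + (β : ℕ)) := by
  have hK : (((n - 1) * (m + 1) : ℕ) : ZMod n) = (n - 1 - k : ℕ) + ((n - 1) * m : ℕ) + k := by
    rw [Nat.mul_succ, show (n - 1) * m + (n - 1) = n - 1 - k + (n - 1) * m + k by omega]
    push_cast
    ring
  rw [Finset.prod_range_add, show n - k - 1 = n - 1 - k by omega]
  congr 1
  · rw [← Finset.prod_range_reflect]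
    refine Finset.prod_congr rfl fun t ht => congrArg z ?_
    have ht : t < n - 1 - k := Finset.mem_range.1 ht
    rw [hK, Nat.cast_sub (by omega : t ≤ n - 1 - k - 1), Nat.cast_sub (by omega : 1 ≤ n - 1 - k),
      Nat.cast_mul, Nat.cast_sub hn, ZMod.natCast_self]
    ring
  · refine Finset.prod_congr rfl fun β _ => congrArg z ?_
    rw [hK]
    push_cast
    ring

lemma sigmaBarF_cons_append_singleton (hn : 1 ≤ n) (r : ZMod n) (y z : Vec n)
    (L : List (Vec n)) :
    sigmaBarF n r ((n - 1) * (L.length + 1)) (y :: L ++ [z]) =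
      ∑ k ∈ Finset.range n,
        (∏ t ∈ Finset.range k, y (r - (t : ℕ))) *
          sigmaBarF n (r - (k : ℕ)) ((n - 1) * L.length) (L ++ [z]) *
          ∏ s ∈ Finset.range (n - k - 1), z (r - (k : ℕ) + (L.length : ℕ) - (s : ℕ)) := by
  set K := (n - 1) * (L.length + 1)
  rw [sigmaBarF_append_singleton]
  simp only [tauF_cons, Finset.sum_mul]
  rw [Finset.sum_comm]
  refine Finset.sum_congr rfl fun k hk => ?_
  have hkn : k < n := Finset.mem_range.1 hk
  have hK : K = (n - 1 - k) + (n - 1) * L.length + k := by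
    have : K = (n - 1) * L.length + (n - 1) := Nat.mul_succ _ _
    omega
  calc ∑ t ∈ Finset.range (K + 1), (∏ β ∈ Finset.range k, y (r - (β : ℕ))) *
          tauF n (r - (k : ℕ)) ((K : ℤ) - t - k) L *
          ∏ β ∈ Finset.range t, z (r - (K : ℕ) + 1 + (β : ℕ))
      = (∏ β ∈ Finset.range k, y (r - (β : ℕ))) *
          ∑ t ∈ Finset.range (K + 1),
            tauF n (r - (k : ℕ)) (((n - 1 - k + (n - 1) * L.length : ℕ) : ℤ) - t) L *
            ∏ β ∈ Finset.range t, z (r - (K : ℕ) + 1 + (β : ℕ)) := by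
        rw [Finset.mul_sum]
        refine Finset.sum_congr rfl fun t _ => ?_
        rw [show (K : ℤ) - t - k = ((n - 1 - k + (n - 1) * L.length : ℕ) : ℤ) - t by omega,
          mul_assoc]
    _ = _ := by
        rw [sum_range_tauF_mul_shift _ _ _ _ K (by omega), sigmaBarF_append_singleton,
          Finset.mul_sum, Finset.mul_sum, Finset.sum_mul]
        refine Finset.sum_congr rfl fun s _ => ?_
        rw [prod_shifted_range_split hn z r hkn]
        ring

end SigmaBar

theorem sigmaBar_branching_general (n : ℕ) (hn : 2 ≤ n) (x : ℕ → Vec n)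
    (i j : ℕ) (hij : i < j) (r : ZMod n) :
    sigmaBarF n r ((n - 1) * (j - i)) (seg x i j) =
      ∑ k ∈ Finset.range n,
        (∏ t ∈ Finset.range k, x i (r - (t : ℕ))) *
          sigmaBarF n (r - (k : ℕ)) ((n - 1) * (j - i - 1)) (seg x (i + 1) j) *
          ∏ s ∈ Finset.range (n - k - 1),
            x j (r - (k : ℕ) + (j : ℕ) - (i : ℕ) - 1 - (s : ℕ)) := by
  obtain ⟨m, rfl⟩ : ∃ m, j = i + m + 1 := ⟨j - i - 1, by omega⟩
  have hlen : (seg x (i + 1) (i + m)).length = m := by rw [length_seg]; omega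
  have branching := sigmaBarF_cons_append_singleton (by omega) r (x i) (x (i + m + 1))
    (seg x (i + 1) (i + m))
  rw [hlen] at branching
  rw [seg_succ_right x (by omega : i ≤ i + m + 1), seg_eq_cons x (by omega : i ≤ i + m),
    seg_succ_right x (by omega : i + 1 ≤ i + m + 1), show i + m + 1 - i = m + 1 by omega,
    Nat.add_sub_cancel, branching]
  refine Finset.sum_congr rfl fun k _ => congrArg _ (Finset.prod_congr rfl fun s _ => ?_)
  push_cast
  ring_nf

/-- branching identity for `σ̄`. -/
theorem sigmaBar_branching (n : ℕ) (hn : 2 ≤ n) (x : ℕ → Vec n)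
    (hx : ∀ p r, 0 < x p r) (i j : ℕ) (hij : i < j) (r : ZMod n) :
    sigmaBarF n r ((n - 1) * (j - i)) (seg x i j) =
      ∑ k ∈ Finset.range n,
        (∏ t ∈ Finset.range k, x i (r - (t : ℕ))) *
          sigmaBarF n (r - (k : ℕ)) ((n - 1) * (j - i - 1)) (seg x (i + 1) j) *
          ∏ s ∈ Finset.range (n - k - 1),
            x j (r - (k : ℕ) + (j : ℕ) - (i : ℕ) - 1 - (s : ℕ)) :=
  sigmaBar_branching_general n hn x i j hij r
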